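/- Let W, W' be two 4-tensors on ℝ^4 with the symmetries of the Weyl tensor such that, viewed as symmetric trace-free endomorphisms Ŵ, Ŵ' of Λ²(ℝ^4), they are simultaneously diagonal in the basis {ω^±, η^±, θ^±} built from an orthonormal basis of ℝ^4. Then W ⋆ W' := W'^{kijl}(W_{kijl} + W_{lijk}) = (3/2) W^{kijl} W'_{kijl}. -/
import Mathlib


/-- A constant 4-tensor on `ℝ⁴` with the algebraic symmetries of the Weyl tensor. -/
def IsWeyl (W : Fin 4 → Fin 4 → Fin 4 → Fin 4 → ℝ) : Prop :=
  (∀ k i j l, W k i j l = - W i k j l) ∧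
  (∀ k i j l, W k i j l = - W k i l j) ∧
  (∀ k i j l, W k i j l = W j l k i) ∧
  (∀ k i j l, W k i j l + W i j k l + W j k i l = 0) ∧
  (∀ i j, (∑ k, W k i j k) = 0)

/-- A tensor with Riemann symmetries acts on 2-forms (antisymmetric matrices): on the basis,
`T̂(eⁱ∧eʲ) = Σ_{k<l} T_{ijlk} eᵏ∧eˡ`, i.e. in components `(T̂ω)_{kl} = (1/2) T_{ijlk} ω^{ij}`. -/
noncomputable def hatMap (T : Fin 4 → Fin 4 → Fin 4 → Fin 4 → ℝ)
    (ω : Fin 4 → Fin 4 → ℝ) : Fin 4 → Fin 4 → ℝ :=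
  fun k l => (1/2 : ℝ) * ∑ i, ∑ j, T i j l k * ω i j

/-- The elementary 2-form `eᵃ∧eᵇ` as an antisymmetric matrix. -/
noncomputable def form2 (a b : Fin 4) : Fin 4 → Fin 4 → ℝ :=
  fun i j => (if i = a ∧ j = b then (1:ℝ) else 0) - (if i = b ∧ j = a then (1:ℝ) else 0)

/-- `T̂` is diagonal in the standard basis `ω± = e¹∧e² ± e³∧e⁴`, `η± = e¹∧e³ ± e⁴∧e²`,
`θ± = e¹∧e⁴ ± e²∧e³` of `Λ²(ℝ⁴) = Λ²₊ ⊕ Λ²₋`. -/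
def IsDiagonalized (T : Fin 4 → Fin 4 → Fin 4 → Fin 4 → ℝ) : Prop :=
  ∃ lp mp np lm mm nm : ℝ,
    hatMap T (form2 0 1 + form2 2 3) = lp • (form2 0 1 + form2 2 3) ∧
    hatMap T (form2 0 2 + form2 3 1) = mp • (form2 0 2 + form2 3 1) ∧
    hatMap T (form2 0 3 + form2 1 2) = np • (form2 0 3 + form2 1 2) ∧
    hatMap T (form2 0 1 - form2 2 3) = lm • (form2 0 1 - form2 2 3) ∧
    hatMap T (form2 0 2 - form2 3 1) = mm • (form2 0 2 - form2 3 1) ∧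
    hatMap T (form2 0 3 - form2 1 2) = nm • (form2 0 3 - form2 1 2)


private lemma sum3_rev (g : Fin 4 → Fin 4 → Fin 4 → ℝ) :
    (∑ a, ∑ b, ∑ c, g a b c) = ∑ c, ∑ b, ∑ a, g a b c := by
  calc (∑ a, ∑ b, ∑ c, g a b c)
      = ∑ b, ∑ a, ∑ c, g a b c := Finset.sum_comm
    _ = ∑ b, ∑ c, ∑ a, g a b c := Finset.sum_congr rfl fun b _ => Finset.sum_comm
    _ = ∑ c, ∑ b, ∑ a, g a b c := Finset.sum_comm

private lemma swap13 (f : Fin 4 → Fin 4 → Fin 4 → Fin 4 → ℝ) :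
    (∑ a, ∑ b, ∑ c, ∑ d, f a b c d) = ∑ a, ∑ b, ∑ c, ∑ d, f c b a d :=
  sum3_rev (fun a b c => ∑ d, f a b c d)

private lemma swap24 (f : Fin 4 → Fin 4 → Fin 4 → Fin 4 → ℝ) :
    (∑ a, ∑ b, ∑ c, ∑ d, f a b c d) = ∑ a, ∑ b, ∑ c, ∑ d, f a d c b :=
  Finset.sum_congr rfl fun a _ => sum3_rev (fun b c d => f a b c d)

private lemma swap34 (f : Fin 4 → Fin 4 → Fin 4 → Fin 4 → ℝ) :
    (∑ a, ∑ b, ∑ c, ∑ d, f a b c d) = ∑ a, ∑ b, ∑ c, ∑ d, f a b d c :=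
  Finset.sum_congr rfl fun a _ => Finset.sum_congr rfl fun b _ => Finset.sum_comm

/-- If two algebraic Weyl tensors are simultaneously diagonal in the basis `{ω±,η±,θ±}`,
then `W ⋆ W' := W'^{kijl}(W_{kijl} + W_{lijk}) = (3/2) W^{kijl} W'_{kijl}`. -/
theorem stmt_14 (W W' : Fin 4 → Fin 4 → Fin 4 → Fin 4 → ℝ)
    (hW : IsWeyl W) (hW' : IsWeyl W')
    (hdW : IsDiagonalized W) (hdW' : IsDiagonalized W') :
    (∑ k, ∑ i, ∑ j, ∑ l, W' k i j l * (W k i j l + W l i j k))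
      = (3/2 : ℝ) * ∑ k, ∑ i, ∑ j, ∑ l, W k i j l * W' k i j l := by
  obtain ⟨h1, h2, h3, h4, -⟩ := hW
  obtain ⟨h1', h2', h3', h4', -⟩ := hW'
  set S : ℝ := ∑ a, ∑ b, ∑ c, ∑ d, W' a b c d * W a b c d with hSdef
  set T : ℝ := ∑ a, ∑ b, ∑ c, ∑ d, W' a b c d * W a c b d with hTdef
  set U : ℝ := ∑ a, ∑ b, ∑ c, ∑ d, W' a b c d * W c b a d with hUdef
  -- pointwise symmetry facts
  have e1 : ∀ a b c d, W d b c a = W a c b d := by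
    intro a b c d
    have p1 := h3 d b c a
    have p2 := h1 c a d b
    have p3 := h2 a c d b
    linarith
  have e2 : ∀ a b c d, W a c b d = W a b c d - W c b a d := by
    intro a b c d
    have p1 := h4 a c b d
    have p2 := h1 b a c d
    linarith
  -- the LHS splits as S + T
  have hsplit : (∑ k, ∑ i, ∑ j, ∑ l, W' k i j l * (W k i j l + W l i j k)) = S + T := by
    have : ∀ a b c d : Fin 4, W' a b c d * (W a b c d + W d b c a)
        = W' a b c d * W a b c d + W' a b c d * W a c b d := by
      intro a b c d; rw [e1 a b c d]; ring
    simp only [this, Finset.sum_add_distrib, hSdef, hTdef]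
  -- Bianchi: T = S - U
  have hTSU : T = S - U := by
    have : ∀ a b c d : Fin 4, W' a b c d * W a c b d
        = W' a b c d * W a b c d - W' a b c d * W c b a d := by
      intro a b c d; rw [e2]; ring
    simp only [hTdef, this, Finset.sum_sub_distrib, hSdef, hUdef]
  -- U = T
  have hUT : U = T := by
    calc U = ∑ a, ∑ b, ∑ c, ∑ d, W' c b a d * W a b c d :=
            swap13 (fun a b c d => W' a b c d * W c b a d)
      _ = ∑ a, ∑ b, ∑ c, ∑ d, W' a d c b * W a b c d := by
            refine Finset.sum_congr rfl fun a _ => Finset.sum_congr rfl fun b _ =>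
              Finset.sum_congr rfl fun c _ => Finset.sum_congr rfl fun d _ => ?_
            rw [h3' c b a d]
      _ = ∑ a, ∑ b, ∑ c, ∑ d, W' a b c d * W a d c b :=
            swap24 (fun a b c d => W' a d c b * W a b c d)
      _ = ∑ a, ∑ b, ∑ c, ∑ d, W' a b d c * W a c d b :=
            swap34 (fun a b c d => W' a b c d * W a d c b)
      _ = T := by
            refine Finset.sum_congr rfl fun a _ => Finset.sum_congr rfl fun b _ =>
              Finset.sum_congr rfl fun c _ => Finset.sum_congr rfl fun d _ => ?_
            rw [h2' a b c d, h2 a c b d]; ring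
  -- RHS sum equals S
  have hRS : (∑ k, ∑ i, ∑ j, ∑ l, W k i j l * W' k i j l) = S := by
    simp only [hSdef]
    exact Finset.sum_congr rfl fun a _ => Finset.sum_congr rfl fun b _ =>
      Finset.sum_congr rfl fun c _ => Finset.sum_congr rfl fun d _ => mul_comm _ _
  rw [hsplit, hRS]
  linarith
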